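/- arXiv:2406.10487 — 6 statements merged into one kernel-verified Lean document; each statement's English description precedes it below -/
import Mathlib

section
/- For 0 ≤ k ≤ C(n,2), the over-Mahonian numbers satisfy i_{B'}(n,k) = i_{B'}(n,k-1) + i_{B'}(n-1,k) + i_{B'}(n-1,k-1) - 2·i_{B'}(n-1,k-n). -/
open Polynomial Finset

/-- Row generating polynomial of the over-Mahonian numbers:
`∏_{m=1}^{n-1} (1 + 2z + 2z² + ⋯ + 2zᵐ)`. -/
noncomputable def overMahonianPoly (n : ℕ) : Polynomial ℕ :=
  ∏ m ∈ Finset.Icc 1 (n - 1), (1 + 2 * ∑ j ∈ Finset.Icc 1 m, Polynomial.X ^ j)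

/-- The over-Mahonian number `i_{B'}(n,k)`, with `k` an integer (zero for `k < 0`). -/
noncomputable def overMahonianZ (n : ℕ) (k : ℤ) : ℕ :=
  if 0 ≤ k then (overMahonianPoly n).coeff k.toNat else 0

/-- The over-Mahonian number `i_{B'}(n,k)` for natural `k`. -/
noncomputable def overMahonian (n k : ℕ) : ℕ := (overMahonianPoly n).coeff k

noncomputable def omQ (n : ℕ) : Polynomial ℤ :=
  (overMahonianPoly n).map (Nat.castRingHom ℤ)

lemma key_factor (m : ℕ) :
    (1 - X : Polynomial ℤ) * (1 + 2 * ∑ j ∈ Finset.Icc 1 m, X ^ j)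
      = 1 + X - 2 * X ^ (m + 1) := by
  induction m with
  | zero => simp; ring
  | succ m ih =>
      rw [Finset.sum_Icc_succ_top (by omega : 1 ≤ m + 1)]
      have : (1 - X : Polynomial ℤ) * (1 + 2 * (∑ j ∈ Finset.Icc 1 m, X ^ j + X ^ (m+1)))
          = (1 - X) * (1 + 2 * ∑ j ∈ Finset.Icc 1 m, X ^ j)
            + (1 - X) * (2 * X ^ (m+1)) := by ring
      rw [this, ih]; ring

lemma omQ_step (n : ℕ) (hn : 2 ≤ n) :
    (1 - X) * omQ n = omQ (n - 1) * (1 + X - 2 * X ^ n) := by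
  have h1 : overMahonianPoly n
      = overMahonianPoly (n - 1) * (1 + 2 * ∑ j ∈ Finset.Icc 1 (n - 1), X ^ j) := by
    unfold overMahonianPoly
    have h2 : n - 1 = (n - 2) + 1 := by omega
    have h3 : n - 1 - 1 = n - 2 := by omega
    rw [h3, h2, Finset.prod_Icc_succ_top (by omega : 1 ≤ n - 2 + 1)]
  have hmap : omQ n = omQ (n - 1) * (1 + 2 * ∑ j ∈ Finset.Icc 1 (n - 1), X ^ j) := by
    unfold omQ
    rw [h1, Polynomial.map_mul]
    congr 1
    simp [Polynomial.map_add, Polynomial.map_mul, Polynomial.map_sum, Polynomial.map_pow]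
  rw [hmap, show (1 - X : Polynomial ℤ) * (omQ (n-1) * (1 + 2 * ∑ j ∈ Finset.Icc 1 (n-1), X ^ j))
      = omQ (n-1) * ((1 - X) * (1 + 2 * ∑ j ∈ Finset.Icc 1 (n-1), X ^ j)) by ring,
    key_factor, show n - 1 + 1 = n by omega]

lemma overMahonianZ_cast (n k j : ℕ) :
    (overMahonianZ n ((k : ℤ) - j) : ℤ)
      = if j ≤ k then (omQ n).coeff (k - j) else 0 := by
  unfold overMahonianZ omQ
  by_cases h : j ≤ k
  · rw [if_pos h, if_pos (by omega : (0:ℤ) ≤ (k:ℤ) - j)]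
    rw [Polynomial.coeff_map]
    have : ((k : ℤ) - j).toNat = k - j := by omega
    rw [this]; simp
  · rw [if_neg h, if_neg (by omega : ¬ (0:ℤ) ≤ (k:ℤ) - j)]
    simp

theorem overMahonian_four_term_recurrence (n : ℕ) (k : ℕ) (hn : 1 ≤ n)
    (hk : k ≤ n.choose 2) :
    (overMahonianZ n k : ℤ) =
      overMahonianZ n ((k : ℤ) - 1) + overMahonianZ (n - 1) (k : ℤ) +
        overMahonianZ (n - 1) ((k : ℤ) - 1) - 2 * overMahonianZ (n - 1) ((k : ℤ) - n) := by
  rcases eq_or_lt_of_le hn with h1 | h2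
  · -- n = 1, so k = 0
    have hn1 : n = 1 := h1.symm
    subst hn1
    have hk0 : k = 0 := by simpa using hk
    subst hk0
    have hpoly : overMahonianPoly 1 = 1 := by
      unfold overMahonianPoly; simp
    have hpoly0 : overMahonianPoly 0 = 1 := by
      unfold overMahonianPoly; simp
    simp [overMahonianZ, hpoly, hpoly0]
  · have hn2 : 2 ≤ n := h2
    have hstep := omQ_step n hn2
    have hc := congrArg (fun p => Polynomial.coeff p k) hstep
    simp only [Polynomial.coeff_sub, Polynomial.coeff_add, Polynomial.coeff_mul,
      sub_mul, one_mul, Polynomial.coeff_sub] at hc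
    -- rewrite in mul_X_pow' friendly form
    have hid : (omQ n).coeff k - (omQ n * X).coeff k
        = (omQ (n-1)).coeff k + (omQ (n-1) * X).coeff k
          - 2 * (omQ (n-1) * X ^ n).coeff k := by
      have e1 : (1 - X) * omQ n = omQ n - omQ n * X := by ring
      have e2 : omQ (n-1) * (1 + X - 2 * X ^ n)
          = omQ (n-1) + omQ (n-1) * X - 2 * (omQ (n-1) * X ^ n) := by ring
      have := congrArg (fun p => Polynomial.coeff p k) (e1 ▸ e2 ▸ hstep)
      simpa using this
    have hx1 : ∀ p : Polynomial ℤ, (p * X).coeff k = if 1 ≤ k then p.coeff (k - 1) else 0 := by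
      intro p
      have := Polynomial.coeff_mul_X_pow' p 1 k
      simpa using this
    have hxn : (omQ (n-1) * X ^ n).coeff k
        = if n ≤ k then (omQ (n-1)).coeff (k - n) else 0 :=
      Polynomial.coeff_mul_X_pow' _ n k
    rw [hx1, hx1, hxn] at hid
    have c0 := overMahonianZ_cast n k 0
    have c1 := overMahonianZ_cast n k 1
    have c2 := overMahonianZ_cast (n-1) k 0
    have c3 := overMahonianZ_cast (n-1) k 1
    have c4 := overMahonianZ_cast (n-1) k n
    simp only [Nat.cast_zero, sub_zero, Nat.sub_zero, if_pos (Nat.zero_le k)] at c0 c2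
    rw [show ((1:ℕ):ℤ) = 1 by norm_num] at c1 c3
    rw [c0, c1, c2, c3, c4]
    split_ifs at hid ⊢ <;> linarith
end

section
/- For every integer n ≥ 1, i_{B'}(n, C(n,2)) = 2^{n-1}. -/
open Polynomial Finset

lemma factor_natDegree_le (m : ℕ) :
    ((1 : ℕ[X]) + 2 * ∑ j ∈ Finset.Icc 1 m, X ^ j).natDegree ≤ m := by
  apply (Polynomial.natDegree_add_le _ _).trans
  simp only [Polynomial.natDegree_one, max_le_iff]
  refine ⟨Nat.zero_le _, (Polynomial.natDegree_mul_le).trans ?_⟩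
  simp only [Polynomial.natDegree_ofNat, zero_add]
  apply (Polynomial.natDegree_sum_le _ _).trans
  simp only [Finset.fold_max_le]
  exact ⟨Nat.zero_le _, fun j hj => by simpa using (Finset.mem_Icc.mp hj).2⟩

lemma factor_coeff (m : ℕ) (hm : 1 ≤ m) :
    ((1 : ℕ[X]) + 2 * ∑ j ∈ Finset.Icc 1 m, X ^ j).coeff m = 2 := by
  rw [Polynomial.coeff_add, Polynomial.coeff_one, if_neg (by omega),
    Polynomial.coeff_ofNat_mul, Polynomial.finset_sum_coeff]
  simp only [Polynomial.coeff_X_pow]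
  rw [Finset.sum_ite_eq _ m, if_pos (Finset.mem_Icc.mpr ⟨hm, le_refl m⟩)]
  omega

lemma overMahonian_key (n : ℕ) : (overMahonianPoly n).natDegree ≤ n.choose 2 ∧
    (overMahonianPoly n).coeff (n.choose 2) = 2 ^ (n - 1) := by
  induction n with
  | zero => simp [overMahonianPoly]
  | succ n ih =>
    rcases Nat.eq_zero_or_pos n with rfl | hn
    · simp [overMahonianPoly]
    have hprod : overMahonianPoly (n + 1)
        = overMahonianPoly n * (1 + 2 * ∑ j ∈ Finset.Icc 1 n, X ^ j) := by
      unfold overMahonianPoly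
      rw [Nat.add_sub_cancel]
      obtain ⟨m, rfl⟩ := Nat.exists_eq_succ_of_ne_zero hn.ne'
      rw [Finset.prod_Icc_succ_top (by omega)]
      simp
    have hch : (n + 1).choose 2 = n.choose 2 + n := by
      rw [Nat.choose_succ_succ]
      simp [Nat.choose_one_right, Nat.add_comm]
    constructor
    · rw [hprod, hch]
      exact Polynomial.natDegree_mul_le.trans (Nat.add_le_add ih.1 (factor_natDegree_le n))
    · rw [hprod, hch, Polynomial.coeff_mul_add_eq_of_natDegree_le ih.1 (factor_natDegree_le n),
        ih.2, factor_coeff n hn]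
      rw [Nat.add_sub_cancel]
      cases n with
      | zero => omega
      | succ k => rw [Nat.add_sub_cancel, pow_succ]

theorem overMahonian_max (n : ℕ) (hn : 1 ≤ n) :
    overMahonian n (n.choose 2) = 2 ^ (n - 1) := by
  exact (overMahonian_key n).2
end

section
/- Define B'_n = ∑_{k=0}^{C(n,2)} k·i_{B'}(n,k), the total number of inversions over all overlined permutations in B'_n. Then B'_1 = 0 and, for n ≥ 2, B'_n = (2n-3)!!·n(n-1) + (2n-1)·B'_{n-1}. -/
open Polynomial Finset

noncomputable def totalInv (n : ℕ) : ℕ :=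
  ∑ k ∈ Finset.range (n.choose 2 + 1), k * overMahonian n k

lemma sum_Icc_id (m : ℕ) : (∑ j ∈ Icc 1 m, j) * 2 = m * (m + 1) := by
  have h : Icc 1 m = Ico 1 (m+1) := by rw [Finset.Ico_add_one_right_eq_Icc]
  rw [h]
  have h2 : ∑ j ∈ Ico 1 (m+1), j = ∑ j ∈ range (m+1), j := by
    rw [Finset.range_eq_Ico, Finset.sum_Ico_eq_sum_range, Finset.sum_Ico_eq_sum_range]
    simp only [Nat.add_sub_cancel, Nat.sub_zero]
    rw [Finset.sum_range_succ']
    simp [add_comm]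
  rw [h2, Finset.sum_range_id_mul_two]
  simp [Nat.mul_comm]

lemma choose_two_eq (n : ℕ) : n.choose 2 = ∑ m ∈ Icc 1 (n-1), m := by
  rcases n with _ | m
  · simp
  · have h1 := sum_Icc_id m
    have h2 : (m+1).choose 2 = (m+1) * m / 2 := by
      rw [Nat.choose_two_right]; simp
    have h3 : (m+1) * m = m * (m+1) := Nat.mul_comm _ _
    simp only [Nat.add_sub_cancel]
    omega

lemma natDegree_Q (m : ℕ) :
    (1 + 2 * ∑ j ∈ Icc 1 m, (X : ℕ[X]) ^ j).natDegree ≤ m := by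
  refine (natDegree_add_le _ _).trans ?_
  simp only [natDegree_one, Nat.zero_le, max_le_iff, true_and]
  refine (natDegree_mul_le).trans ?_
  have h2 : (2 : ℕ[X]).natDegree = 0 := by
    simpa using natDegree_C (2 : ℕ)
  rw [h2, zero_add]
  refine natDegree_sum_le_of_forall_le _ _ fun j hj => ?_
  simp only [natDegree_X_pow]
  exact (Finset.mem_Icc.mp hj).2

lemma natDegree_P (n : ℕ) : (overMahonianPoly n).natDegree ≤ n.choose 2 := by
  refine (natDegree_prod_le _ _).trans ?_
  rw [choose_two_eq]
  exact Finset.sum_le_sum fun m _ => natDegree_Q m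

lemma totalInv_eq_eval (n : ℕ) :
    totalInv n = (derivative (overMahonianPoly n)).eval 1 := by
  have hP := natDegree_P n
  have hD := natDegree_derivative_le (overMahonianPoly n)
  have hdeg : (derivative (overMahonianPoly n)).natDegree < n.choose 2 + 1 := by omega
  rw [Polynomial.eval_eq_sum_range' hdeg 1]
  have hR : ∀ i ∈ range (n.choose 2 + 1),
      (derivative (overMahonianPoly n)).coeff i * (1:ℕ)^i
        = (overMahonianPoly n).coeff (i+1) * (i+1) := by
    intro i _
    rw [coeff_derivative]
    push_cast
    ring
  rw [Finset.sum_congr rfl hR, Finset.sum_range_succ]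
  have hz : (overMahonianPoly n).coeff (n.choose 2 + 1) = 0 :=
    coeff_eq_zero_of_natDegree_lt (by omega)
  rw [hz]
  simp only [zero_mul, add_zero]
  unfold totalInv overMahonian
  rw [Finset.sum_range_succ']
  simp only [zero_mul, add_zero]
  exact Finset.sum_congr rfl fun i _ => by ring

lemma eval_Q (m : ℕ) :
    (1 + 2 * ∑ j ∈ Icc 1 m, (X : ℕ[X]) ^ j).eval 1 = 2 * m + 1 := by
  simp [eval_finset_sum, Nat.card_Icc]
  ring

lemma eval_P : ∀ n : ℕ, (overMahonianPoly (n + 1)).eval 1 = Nat.doubleFactorial (2 * n + 1)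
  | 0 => by simp [overMahonianPoly]
  | (n + 1) => by
    have h : overMahonianPoly (n + 2) = overMahonianPoly (n + 1) *
        (1 + 2 * ∑ j ∈ Icc 1 (n+1), (X : ℕ[X]) ^ j) := by
      unfold overMahonianPoly
      simp only [Nat.add_sub_cancel]
      exact Finset.prod_Icc_succ_top (by omega) _
    rw [h, eval_mul, eval_P n, eval_Q]
    have h1 : 2 * (n + 1) + 1 = (2 * n + 1) + 2 := by ring
    rw [h1, Nat.doubleFactorial_add_two]
    ring

lemma eval_derivQ (m : ℕ) :
    (derivative (1 + 2 * ∑ j ∈ Icc 1 m, (X : ℕ[X]) ^ j)).eval 1 = m * (m + 1) := by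
  rw [derivative_add, derivative_one, zero_add, derivative_mul]
  have h2 : derivative (2 : ℕ[X]) = 0 := by
    simp
  rw [h2, zero_mul, zero_add, derivative_sum]
  simp only [derivative_X_pow]
  rw [eval_mul, eval_finset_sum]
  simp only [eval_mul, eval_C, eval_pow, eval_X, one_pow, mul_one, Nat.cast_id]
  rw [← sum_Icc_id m]
  norm_num [mul_comm]

theorem totalInv_recurrence :
    totalInv 1 = 0 ∧
      ∀ n : ℕ, 2 ≤ n →
        totalInv n =
          Nat.doubleFactorial (2 * n - 3) * (n * (n - 1)) + (2 * n - 1) * totalInv (n - 1) := by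
  constructor
  · rw [totalInv_eq_eval]
    unfold overMahonianPoly
    simp
  · intro n hn
    obtain ⟨k, rfl⟩ : ∃ k, n = k + 2 := ⟨n - 2, by omega⟩
    have h : overMahonianPoly (k + 2) = overMahonianPoly (k + 1) *
        (1 + 2 * ∑ j ∈ Icc 1 (k+1), (X : ℕ[X]) ^ j) := by
      unfold overMahonianPoly
      simp only [Nat.add_sub_cancel]
      exact Finset.prod_Icc_succ_top (by omega) _
    rw [totalInv_eq_eval, totalInv_eq_eval, h, derivative_mul, eval_add, eval_mul, eval_mul,
      eval_Q, eval_derivQ, eval_P]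
    have e1 : 2 * (k + 2) - 3 = 2 * k + 1 := by omega
    have e2 : 2 * (k + 2) - 1 = 2 * k + 3 := by omega
    have e3 : (k + 2 : ℕ) - 1 = k + 1 := by omega
    rw [e1, e2, e3]
    ring
end

section
/- For each fixed n ≥ 1, the sequence k ↦ i_{B'}(n,k) is log-concave: i_{B'}(n,k)^2 ≥ i_{B'}(n,k-1)·i_{B'}(n,k+1) for all 0 < k ≤ C(n,2). -/
/-!
Call a sequence `f : ℤ → R` PF₂ if `f (k - 1) * f (l + 1) ≤ f k * f l` whenever `k ≤ l`; chaining
these inequalities gives `f a * f d ≤ f b * f c` whenever `a + d = b + c` and `a ≤ b, c`.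
PF₂ is preserved by convolution: expand both products of convolutions as double sums over `(i, j)`
and compare the terms for `(i, j)` and `(j, i)` together; for each such pair the inequality is the
binary rearrangement inequality applied to a PF₂ inequality of each factor.
Hence polynomials with PF₂ coefficient sequences form a multiplicative submonoid, and every factor
`1 + 2z + ⋯ + 2zᵐ` of the over-Mahonian polynomial has the PF₂ coefficient sequence `1, 2, …, 2`.
Taking `k = l` gives log-concavity.
-/

open Polynomial Finset

open Function

section PF2

variable {R : Type*}

/-- For nonnegative sequences this says that `f` is log-concave without internal zeros, i.e. that
the Toeplitz matrix `(f (j - i))` is totally positive of order two. -/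
def IsPF2 [Mul R] [LE R] (f : ℤ → R) : Prop :=
  ∀ k l : ℤ, k ≤ l → f (k - 1) * f (l + 1) ≤ f k * f l

variable [CommMagma R] [Preorder R] {f : ℤ → R}

theorem IsPF2.apply_sub_mul_apply_add_le (hf : IsPF2 f) {b c : ℤ} (hbc : b ≤ c) (n : ℕ) :
    f (b - n) * f (c + n) ≤ f b * f c := by
  induction n with
  | zero => simp
  | succ n ih =>
    calc f (b - (n + 1 : ℕ)) * f (c + (n + 1 : ℕ)) ≤ f (b - n) * f (c + n) := by
          simpa [sub_sub, add_assoc] using hf (b - n) (c + n) (by omega)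
      _ ≤ f b * f c := ih

theorem IsPF2.apply_mul_apply_le (hf : IsPF2 f) {a b c d : ℤ} (hab : a ≤ b) (hac : a ≤ c)
    (h : a + d = b + c) : f a * f d ≤ f b * f c := by
  wlog hbc : b ≤ c generalizing b c
  · rw [mul_comm (f b)]
    exact this hac hab (by rw [h, add_comm]) (le_of_not_ge hbc)
  obtain ⟨n, hn⟩ := Int.eq_ofNat_of_zero_le (sub_nonneg.2 hab)
  obtain rfl : a = b - n := by omega
  obtain rfl : d = c + n := by omega
  exact hf.apply_sub_mul_apply_add_le hbc n

end PF2

theorem Finset.sum_sum_le_sum_sum_of_add_swap_le {ι M : Type*} [AddCommMonoid M] [LinearOrder M]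
    [IsOrderedCancelAddMonoid M] (s : Finset ι) {A B : ι → ι → M}
    (h : ∀ i ∈ s, ∀ j ∈ s, A i j + A j i ≤ B i j + B j i) :
    ∑ i ∈ s, ∑ j ∈ s, A i j ≤ ∑ i ∈ s, ∑ j ∈ s, B i j := by
  have hsymm : ∀ C : ι → ι → M,
      ∑ i ∈ s, ∑ j ∈ s, (C i j + C j i) = 2 • ∑ i ∈ s, ∑ j ∈ s, C i j := fun C => by
    simp only [sum_add_distrib, two_nsmul]
    rw [sum_comm (f := fun i j => C j i)]
  rw [← nsmul_le_nsmul_iff_right two_ne_zero, ← hsymm, ← hsymm]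
  exact sum_le_sum fun i hi => sum_le_sum fun j hj => h i hi j hj

section Convolution

variable {R : Type*} [CommSemiring R]

noncomputable def discreteConv (f g : ℤ → R) (k : ℤ) : R := ∑ᶠ i, f i * g (k - i)

theorem discreteConv_eq_sum {f : ℤ → R} (g : ℤ → R) {s : Finset ℤ} (hs : support f ⊆ s) (k : ℤ) :
    discreteConv f g k = ∑ i ∈ s, f i * g (k - i) :=
  finsum_eq_sum_of_support_subset _ ((support_mul_subset_left _ _).trans hs)

variable [LinearOrder R] [IsStrictOrderedRing R] [ExistsAddOfLE R]

theorem IsPF2.discreteConv {f g : ℤ → R} (hf : IsPF2 f) (hg : IsPF2 g)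
    (hfin : (support f).Finite) : IsPF2 (discreteConv f g) := by
  intro k l hkl
  set d := l - k + 1
  set U := hfin.toFinset ∪ hfin.toFinset.image (· - d)
  have hU : support f ⊆ U := fun i hi => by simp [U, hi]
  have hshift : ∀ m, _root_.discreteConv f g (m + d) = ∑ j ∈ U, f (j + d) * g (m - j) := fun m => by
    rw [_root_.discreteConv, ← finsum_comp_equiv (Equiv.addRight d)]
    simp only [Equiv.coe_addRight, add_sub_add_right_eq_sub]
    refine finsum_eq_sum_of_support_subset _ ((support_mul_subset_left _ _).trans fun j hj => ?_)
    exact mem_coe.2 <| mem_union_right _ <|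
      mem_image.2 ⟨j + d, hfin.mem_toFinset.2 hj, add_sub_cancel_right j d⟩
  rw [show l + 1 = k + d by omega, show l = k - 1 + d by omega, hshift, hshift,
    discreteConv_eq_sum g hU, discreteConv_eq_sum g hU, sum_mul_sum, sum_mul_sum]
  refine sum_sum_le_sum_sum_of_add_swap_le U fun i hi j hj => ?_
  wlog hij : i ≤ j generalizing i j
  · simpa only [add_comm] using this j hj i hi (le_of_not_ge hij)
  have hfx : f i * f (j + d) ≤ f (i + d) * f j := hf.apply_mul_apply_le (by omega) hij (by ring)
  have hgu : g (k - 1 - j) * g (k - i) ≤ g (k - 1 - i) * g (k - j) :=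
    hg.apply_mul_apply_le (by omega) (by omega) (by ring)
  convert mul_add_mul_le_mul_add_mul hfx hgu using 1 <;> ring

end Convolution

namespace Polynomial

section Semiring

variable {R : Type*} [Semiring R]

noncomputable def coeffInt (p : R[X]) (k : ℤ) : R := if 0 ≤ k then p.coeff k.toNat else 0

@[simp]
theorem coeffInt_natCast (p : R[X]) (n : ℕ) : p.coeffInt n = p.coeff n := by
  simp [coeffInt]

theorem coeffInt_of_neg (p : R[X]) {k : ℤ} (hk : k < 0) : p.coeffInt k = 0 :=
  if_neg hk.not_ge

theorem finite_support_coeffInt (p : R[X]) : (Function.support p.coeffInt).Finite :=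
  (p.support.finite_toSet.image (Nat.cast : ℕ → ℤ)).subset fun k hk => by
    lift k to ℕ using not_lt.1 fun h => hk (p.coeffInt_of_neg h)
    exact ⟨k, by simpa using hk, rfl⟩

end Semiring

theorem coeffInt_mul {R : Type*} [CommSemiring R] (p q : R[X]) :
    (p * q).coeffInt = discreteConv p.coeffInt q.coeffInt := by
  funext k
  rcases lt_or_ge k 0 with hk | hk
  · rw [coeffInt_of_neg _ hk, discreteConv]
    refine (finsum_eq_zero_of_forall_eq_zero fun i => ?_).symm
    rcases lt_or_ge i 0 with hi | hi
    · rw [p.coeffInt_of_neg hi, zero_mul]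
    · rw [q.coeffInt_of_neg (by omega), mul_zero]
  lift k to ℕ using hk
  rw [coeffInt_natCast, coeff_mul, Nat.sum_antidiagonal_eq_sum_range_succ_mk, discreteConv,
    finsum_eq_sum_of_support_subset (s := (range (k + 1)).map Nat.castEmbedding), sum_map]
  · refine sum_congr rfl fun i hi => ?_
    rw [Nat.castEmbedding_apply, ← Nat.cast_sub (Nat.lt_succ_iff.1 (mem_range.1 hi)),
      coeffInt_natCast, coeffInt_natCast]
  · intro i hi
    have hp : p.coeffInt i ≠ 0 := left_ne_zero_of_mul hi
    have hq : q.coeffInt (k - i) ≠ 0 := right_ne_zero_of_mul hi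
    lift i to ℕ using not_lt.1 fun h => hp (p.coeffInt_of_neg h)
    have hik : i ≤ k := le_of_not_gt fun h => hq (q.coeffInt_of_neg (by omega))
    simpa [Nat.lt_succ_iff] using hik

theorem isPF2_coeffInt_one {R : Type*} [Semiring R] [Preorder R] [ZeroLEOneClass R] :
    IsPF2 (1 : R[X]).coeffInt := by
  intro k l hkl
  simp only [coeffInt, coeff_one]
  split_ifs <;> first | omega | simp

section OrderedSemiring

variable {R : Type*} [CommSemiring R] [LinearOrder R] [IsStrictOrderedRing R] [ExistsAddOfLE R]

variable (R) in
def pf2Submonoid : Submonoid R[X] where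
  carrier := {p | IsPF2 p.coeffInt}
  mul_mem' {p q} hp hq := by
    rw [Set.mem_ofPred_eq, coeffInt_mul]
    exact hp.discreteConv hq p.finite_support_coeffInt
  one_mem' := isPF2_coeffInt_one

theorem mem_pf2Submonoid {p : R[X]} : p ∈ pf2Submonoid R ↔ IsPF2 p.coeffInt := Iff.rfl

end OrderedSemiring

theorem coeffInt_one_add_two_mul_sum_X_pow (m : ℕ) (t : ℤ) :
    (1 + 2 * ∑ j ∈ Icc 1 m, X ^ j : ℕ[X]).coeffInt t =
      if t = 0 then 1 else if 1 ≤ t ∧ t ≤ m then 2 else 0 := by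
  rcases lt_or_ge t 0 with ht | ht
  · rw [coeffInt_of_neg _ ht, if_neg (by omega), if_neg (by omega)]
  lift t to ℕ using ht
  simp only [coeffInt_natCast, coeff_add, coeff_one, coeff_ofNat_mul, finsetSum_coeff, coeff_X_pow,
    sum_ite_eq, mem_Icc]
  split_ifs <;> omega

theorem one_add_two_mul_sum_X_pow_mem_pf2Submonoid (m : ℕ) :
    (1 + 2 * ∑ j ∈ Icc 1 m, X ^ j : ℕ[X]) ∈ pf2Submonoid ℕ := by
  rw [mem_pf2Submonoid]
  intro k l hkl
  simp only [coeffInt_one_add_two_mul_sum_X_pow]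
  split_ifs <;> omega

end Polynomial

theorem overMahonianPoly_mem_pf2Submonoid (n : ℕ) : overMahonianPoly n ∈ pf2Submonoid ℕ :=
  prod_mem fun m _ => one_add_two_mul_sum_X_pow_mem_pf2Submonoid m

theorem overMahonian_log_concave_general (n : ℕ) (k : ℕ) (hk0 : 0 < k) :
    overMahonian n (k - 1) * overMahonian n (k + 1) ≤ overMahonian n k ^ 2 := by
  have h := mem_pf2Submonoid.1 (overMahonianPoly_mem_pf2Submonoid n) k k le_rfl
  rw [show (k : ℤ) - 1 = (k - 1 : ℕ) by omega, show (k : ℤ) + 1 = (k + 1 : ℕ) by omega] at h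
  simpa only [coeffInt_natCast, overMahonian, sq] using h

theorem overMahonian_log_concave (n : ℕ) (hn : 1 ≤ n) (k : ℕ) (hk0 : 0 < k)
    (hk : k ≤ n.choose 2) :
    overMahonian n (k - 1) * overMahonian n (k + 1) ≤ overMahonian n k ^ 2 :=
  overMahonian_log_concave_general n k hk0
end

section
/- For each fixed n ≥ 1, the sequence k ↦ i_{B'}(n,k), for 0 ≤ k ≤ C(n,2), is unimodal: there exists an index m* with 0 ≤ m* ≤ C(n,2) such that i_{B'}(n,k) is non-decreasing for k ≤ m* and non-increasing for k ≥ m*. -/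
open Polynomial Finset

section OverMahonianProof

set_option linter.unreachableTactic false
set_option linter.unusedTactic false
set_option linter.unusedVariables false


/-- Extension of the coefficient sequence of a `ℕ`-polynomial to `ℤ`-indices, valued in `ℤ`. -/
noncomputable def ecoeff (p : Polynomial ℕ) : ℤ → ℤ :=
  fun k => if 0 ≤ k then (p.coeff k.toNat : ℤ) else 0

/-- Log-concavity (PF₂) condition on a `ℤ`-indexed sequence. -/
def LCg (f : ℤ → ℤ) : Prop := ∀ i j : ℤ, i ≤ j → f (i - 1) * f (j + 1) ≤ f i * f j

lemma ecoeff_nonneg (p : Polynomial ℕ) (k : ℤ) : 0 ≤ ecoeff p k := by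
  unfold ecoeff; split_ifs <;> positivity

lemma ecoeff_neg (p : Polynomial ℕ) (k : ℤ) (h : k < 0) : ecoeff p k = 0 := by
  simp [ecoeff, not_le.2 h]

lemma ecoeff_gt (p : Polynomial ℕ) (k : ℤ) (h : (p.natDegree : ℤ) < k) : ecoeff p k = 0 := by
  have h0 : 0 ≤ k := le_trans (Int.natCast_nonneg _) h.le
  have : p.natDegree < k.toNat := by omega
  simp [ecoeff, h0, Polynomial.coeff_eq_zero_of_natDegree_lt this]

/-- generalized spreading inequality from log-concavity -/
lemma lcg_gen_aux {f : ℤ → ℤ} (hf : LCg f) :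
    ∀ n : ℕ, ∀ α β γ δ : ℤ, α + β = γ + δ → α ≤ γ → γ ≤ δ → (γ - α).toNat = n →
      f α * f β ≤ f γ * f δ := by
  intro n
  induction n with
  | zero =>
    intro α β γ δ hsum h1 h2 hn
    have h3 : α = γ := by omega
    subst h3
    have h4 : β = δ := by omega
    subst h4
    exact le_rfl
  | succ n ih =>
    intro α β γ δ hsum h1 h2 hn
    have hαγ : α < γ := by omega
    have hstep : f α * f β ≤ f (α + 1) * f (β - 1) := by
      have := hf (α + 1) (β - 1) (by omega)
      simpa using this
    refine hstep.trans (ih (α + 1) (β - 1) γ δ (by omega) (by omega) h2 (by omega))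

lemma lcg_gen {f : ℤ → ℤ} (hf : LCg f) (α β γ δ : ℤ) (hsum : α + β = γ + δ)
    (h1 : α ≤ γ) (h2 : α ≤ δ) : f α * f β ≤ f γ * f δ := by
  rcases le_total γ δ with h | h
  · exact lcg_gen_aux hf (γ - α).toNat α β γ δ hsum h1 h rfl
  · rw [mul_comm (f γ)]
    exact lcg_gen_aux hf (δ - α).toNat α β δ γ (by omega) h2 h rfl

/-- convolution formula for `ecoeff` of a product. -/
lemma ecoeff_mul (p q : Polynomial ℕ) (k : ℤ) (W : Finset ℤ)
    (hW : Finset.Icc (0 : ℤ) (p.natDegree : ℤ) ⊆ W) :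
    ecoeff (p * q) k = ∑ i ∈ W, ecoeff p i * ecoeff q (k - i) := by
  have key : ∀ i ∈ W, i ∉ Finset.Icc (0:ℤ) (min (p.natDegree : ℤ) k) →
      ecoeff p i * ecoeff q (k - i) = 0 := by
    intro i _ hni
    rw [Finset.mem_Icc] at hni
    rcases lt_or_ge i 0 with h | h
    · rw [ecoeff_neg p i h, zero_mul]
    · rcases lt_or_ge (p.natDegree : ℤ) i with h2 | h2
      · rw [ecoeff_gt p i h2, zero_mul]
      · rw [ecoeff_neg q _ (by omega), mul_zero]
  have hsub : Finset.Icc (0:ℤ) (min (p.natDegree : ℤ) k) ⊆ W :=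
    subset_trans (Finset.Icc_subset_Icc le_rfl (min_le_left _ _)) hW
  rw [← Finset.sum_subset hsub key]
  have key2 : ∀ i ∈ Finset.Icc (0:ℤ) k, i ∉ Finset.Icc (0:ℤ) (min (p.natDegree : ℤ) k) →
      ecoeff p i * ecoeff q (k - i) = 0 := by
    intro i hi hni
    rw [Finset.mem_Icc] at hi
    rw [Finset.mem_Icc] at hni
    rw [ecoeff_gt p i (by omega), zero_mul]
  rcases lt_or_ge k 0 with hk | hk
  · rw [ecoeff_neg _ _ hk]
    have : Finset.Icc (0:ℤ) (min (p.natDegree : ℤ) k) = ∅ := by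
      rw [Finset.Icc_eq_empty_iff]
      omega
    rw [this, Finset.sum_empty]
  · have hsub2 : Finset.Icc (0:ℤ) (min (p.natDegree : ℤ) k) ⊆ Finset.Icc (0:ℤ) k :=
      Finset.Icc_subset_Icc le_rfl (min_le_right _ _)
    rw [Finset.sum_subset hsub2 key2]
    have hrw : ecoeff (p * q) k = ∑ x ∈ Finset.range (k.toNat + 1),
        (p.coeff x : ℤ) * (q.coeff (k.toNat - x) : ℤ) := by
      rw [ecoeff]
      rw [if_pos hk, Polynomial.coeff_mul, Finset.Nat.sum_antidiagonal_eq_sum_range_succ_mk]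
      push_cast
      rfl
    rw [hrw]
    refine Finset.sum_bij' (fun (x : ℕ) _ => (x : ℤ)) (fun (i : ℤ) _ => i.toNat) ?_ ?_ ?_ ?_ ?_
    · intro x hx
      rw [Finset.mem_range] at hx
      rw [Finset.mem_Icc]
      omega
    · intro i hi
      rw [Finset.mem_Icc] at hi
      rw [Finset.mem_range]
      omega
    · intro x hx
      omega
    · intro i hi
      rw [Finset.mem_Icc] at hi
      omega
    · intro x hx
      rw [Finset.mem_range] at hx
      have h1 : ecoeff p (x : ℤ) = (p.coeff x : ℤ) := by simp [ecoeff]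
      have h2 : ecoeff q (k - x) = (q.coeff (k.toNat - x) : ℤ) := by
        have h0 : (0:ℤ) ≤ k - x := by omega
        have h3 : (k - (x:ℤ)).toNat = k.toNat - x := by omega
        rw [ecoeff, if_pos h0, h3]
      rw [h1, h2]

lemma LCg_mul (p q : Polynomial ℕ) (hp : LCg (ecoeff p)) (hq : LCg (ecoeff q)) :
    LCg (ecoeff (p * q)) := by
  intro i j hij
  set a : ℤ → ℤ := ecoeff p with ha
  set b : ℤ → ℤ := ecoeff q with hb
  set N : ℤ := (p.natDegree : ℤ) with hN
  set V : Finset ℤ := Finset.Icc (-1 : ℤ) (N + 2) with hV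
  have hVsub : Finset.Icc (0:ℤ) N ⊆ V := Finset.Icc_subset_Icc (by norm_num) (by omega)
  rw [ecoeff_mul p q (i-1) V hVsub, ecoeff_mul p q (j+1) V hVsub,
      ecoeff_mul p q i V hVsub, ecoeff_mul p q j V hVsub]
  rw [Finset.sum_mul_sum, Finset.sum_mul_sum, ← sub_nonneg, ← Finset.sum_sub_distrib]
  simp_rw [← Finset.sum_sub_distrib]
  -- D k l, the paired minor summand
  set D : ℤ → ℤ → ℤ := fun k l =>
    a k * a (l - 1) * (b (i - k) * b (j + 1 - l) - b (i - l) * b (j + 1 - k)) with hD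
  set V2 : Finset ℤ := Finset.Icc (-1 : ℤ) (N + 3) with hV2
  have key : ∑ k ∈ V, ∑ l ∈ V,
      (a k * b (i - k) * (a l * b (j - l)) - a k * b (i - 1 - k) * (a l * b (j + 1 - l)))
      = ∑ k ∈ V2, ∑ l ∈ V2, D k l := by
    have swap : ∑ k ∈ V, ∑ l ∈ V, a k * b (i - 1 - k) * (a l * b (j + 1 - l))
        = ∑ k ∈ V, ∑ l ∈ V, a l * b (i - 1 - l) * (a k * b (j + 1 - k)) :=
      Finset.sum_comm
    simp_rw [Finset.sum_sub_distrib]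
    rw [swap]
    simp_rw [← Finset.sum_sub_distrib]
    have inner : ∀ k, ∑ l ∈ V,
        (a k * b (i - k) * (a l * b (j - l)) - a l * b (i - 1 - l) * (a k * b (j + 1 - k)))
        = ∑ l ∈ V2, D k l := by
      intro k
      have step1 : ∑ l ∈ V,
          (a k * b (i - k) * (a l * b (j - l)) - a l * b (i - 1 - l) * (a k * b (j + 1 - k)))
          = ∑ l ∈ V, D k (l + 1) := by
        refine Finset.sum_congr rfl fun l _ => ?_
        simp only [hD]
        rw [show i - (l + 1) = i - 1 - l by ring, show j + 1 - (l + 1) = j - l by ring,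
            show l + 1 - 1 = l by ring]
        ring
      have step2 : ∑ l ∈ V, D k (l + 1)
          = ∑ l ∈ Finset.Icc (0 : ℤ) (N + 3), D k l := by
        rw [show Finset.Icc (0 : ℤ) (N + 3) = V.map (addRightEmbedding 1) by
              rw [hV, Finset.map_add_right_Icc]; congr 1 <;> ring,
            Finset.sum_map]
        simp [addRightEmbedding_apply]
      have step3 : ∑ l ∈ Finset.Icc (0 : ℤ) (N + 3), D k l = ∑ l ∈ V2, D k l := by
        refine Finset.sum_subset (Finset.Icc_subset_Icc (by norm_num) le_rfl) ?_
        intro l hl hnl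
        rw [hV2, Finset.mem_Icc] at hl
        rw [Finset.mem_Icc] at hnl
        have hl1 : l - 1 < 0 := by omega
        simp only [hD, hb, ha]
        rw [ecoeff_neg p _ hl1]
        ring
      rw [step1, step2, step3]
    rw [Finset.sum_congr rfl fun k _ => inner k]
    refine Finset.sum_subset (Finset.Icc_subset_Icc le_rfl (by omega)) ?_
    intro k hk hnk
    rw [hV2, Finset.mem_Icc] at hk
    rw [hV, Finset.mem_Icc] at hnk
    have hk1 : N < k := by omega
    refine Finset.sum_eq_zero fun l _ => ?_
    simp only [hD, ha, hb]
    rw [ecoeff_gt p _ hk1]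
    ring
  rw [key]
  -- positivity of the symmetrized sum
  have hDD : ∀ k l : ℤ, 0 ≤ D k l + D l k := by
    have base : ∀ k l : ℤ, k ≤ l → 0 ≤ D k l + D l k := by
      intro k l hkl
      rcases eq_or_lt_of_le hkl with rfl | hlt
      · simp [hD, sub_self]
      · have e : D k l + D l k = (a k * a (l - 1) - a l * a (k - 1)) *
            (b (i - k) * b (j + 1 - l) - b (i - l) * b (j + 1 - k)) := by
          simp only [hD]; ring
        rw [e]
        refine mul_nonneg (sub_nonneg.2 ?_) (sub_nonneg.2 ?_)
        · have := hp k (l - 1) (by omega)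
          simp only [sub_add_cancel] at this
          linarith
        · exact lcg_gen hq (i - l) (j + 1 - k) (i - k) (j + 1 - l) (by ring)
            (by omega) (by omega)
    intro k l
    rcases le_total k l with h | h
    · exact base k l h
    · rw [add_comm]; exact base l k h
  have h2 : 0 ≤ ∑ k ∈ V2, ∑ l ∈ V2, (D k l + D l k) :=
    Finset.sum_nonneg fun k _ => Finset.sum_nonneg fun l _ => hDD k l
  have h3 : ∑ k ∈ V2, ∑ l ∈ V2, (D k l + D l k)
      = (∑ k ∈ V2, ∑ l ∈ V2, D k l) + ∑ k ∈ V2, ∑ l ∈ V2, D k l := by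
    simp_rw [Finset.sum_add_distrib]
    congr 1
    exact Finset.sum_comm
  linarith

lemma coeff_factor (m k : ℕ) :
    (1 + 2 * ∑ j ∈ Finset.Icc 1 m, (Polynomial.X : ℕ[X]) ^ j).coeff k
      = (if k = 0 then 1 else 0) + 2 * (if 1 ≤ k ∧ k ≤ m then 1 else 0) := by
  rw [Polynomial.coeff_add, Polynomial.coeff_one]
  congr 1
  rw [show (2 : ℕ[X]) = Polynomial.C 2 by norm_num, Polynomial.coeff_C_mul]
  congr 1
  rw [Polynomial.finset_sum_coeff]
  simp_rw [Polynomial.coeff_X_pow]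
  rw [Finset.sum_ite_eq (Finset.Icc 1 m) k (fun _ => (1:ℕ))]
  simp [Finset.mem_Icc]

lemma ecoeff_factor (m : ℕ) (t : ℤ) :
    ecoeff (1 + 2 * ∑ j ∈ Finset.Icc 1 m, (Polynomial.X : ℕ[X]) ^ j) t
      = if t = 0 then 1 else if 1 ≤ t ∧ t ≤ (m:ℤ) then 2 else 0 := by
  rcases lt_or_ge t 0 with h | h
  · rw [ecoeff_neg _ _ h, if_neg (by omega), if_neg (by omega)]
  · unfold ecoeff
    rw [if_pos h, coeff_factor]
    push_cast
    split_ifs <;> omega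

lemma LCg_factor (m : ℕ) :
    LCg (ecoeff (1 + 2 * ∑ j ∈ Finset.Icc 1 m, (Polynomial.X : ℕ[X]) ^ j)) := by
  intro i j hij
  simp only [ecoeff_factor]
  split_ifs <;> first | omega | norm_num

lemma LCg_one : LCg (ecoeff (1 : ℕ[X])) := by
  have h1 : ∀ t : ℤ, ecoeff (1 : ℕ[X]) t = if t = 0 then 1 else 0 := by
    intro t
    rcases lt_or_ge t 0 with h | h
    · rw [ecoeff_neg _ _ h, if_neg (by omega)]
    · unfold ecoeff
      rw [if_pos h, Polynomial.coeff_one]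
      split_ifs <;> first | rfl | omega
  intro i j hij
  simp only [h1]
  split_ifs <;> first | omega | norm_num

lemma LCg_oM (n : ℕ) : LCg (ecoeff (overMahonianPoly n)) := by
  unfold overMahonianPoly
  exact Finset.prod_induction _ (fun r => LCg (ecoeff r))
    (fun u v hu hv => LCg_mul u v hu hv) LCg_one (fun m _ => LCg_factor m)

lemma QN (n : ℕ) : ∀ i j : ℕ, 1 ≤ i → i ≤ j →
    overMahonian n (i - 1) * overMahonian n (j + 1) ≤ overMahonian n i * overMahonian n j := by
  intro i j h1 hij
  have h := LCg_oM n (i : ℤ) (j : ℤ) (by exact_mod_cast hij)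
  have e : ∀ s : ℤ, 0 ≤ s → ecoeff (overMahonianPoly n) s = (overMahonian n s.toNat : ℤ) := by
    intro s hs
    unfold ecoeff overMahonian
    rw [if_pos hs]
  rw [e ((i:ℤ) - 1) (by omega), e ((j:ℤ) + 1) (by omega), e i (by omega), e j (by omega)] at h
  have t1 : ((i:ℤ) - 1).toNat = i - 1 := by omega
  have t2 : ((j:ℤ) + 1).toNat = j + 1 := by omega
  have t3 : ((i:ℤ)).toNat = i := by omega
  have t4 : ((j:ℤ)).toNat = j := by omega
  rw [t1, t2, t3, t4] at h
  exact_mod_cast h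

lemma desc (n : ℕ) (m : ℕ) (hdrop : overMahonian n (m + 1) < overMahonian n m) :
    ∀ j, m ≤ j → overMahonian n (j + 1) ≤ overMahonian n j := by
  intro j hj
  by_contra hcon
  push_neg at hcon
  rcases eq_or_lt_of_le hj with rfl | hlt
  · omega
  · have h := QN n (m + 1) j (by omega) (by omega)
    simp only [Nat.add_sub_cancel] at h
    nlinarith


end OverMahonianProof

theorem overMahonian_unimodal (n : ℕ) (hn : 1 ≤ n) :
    ∃ m : ℕ, m ≤ n.choose 2 ∧
      (∀ k₁ k₂ : ℕ, k₁ ≤ k₂ → k₂ ≤ m → overMahonian n k₁ ≤ overMahonian n k₂) ∧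
      (∀ k₁ k₂ : ℕ, m ≤ k₁ → k₁ ≤ k₂ → k₂ ≤ n.choose 2 →
        overMahonian n k₂ ≤ overMahonian n k₁) := by
  set D := n.choose 2 with hD
  set c := overMahonian n with hc
  have chain_up : ∀ m : ℕ, (∀ k, k < m → c k ≤ c (k + 1)) →
      ∀ k₁ k₂ : ℕ, k₁ ≤ k₂ → k₂ ≤ m → c k₁ ≤ c k₂ := by
    intro m hstep k₁ k₂ h12
    induction k₂, h12 using Nat.le_induction with
    | base => intro _; exact le_rfl
    | succ k₂ hk ih =>
      intro h2m
      exact (ih (by omega)).trans (hstep k₂ (by omega))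
  have chain_down : ∀ m : ℕ, (∀ k, m ≤ k → c (k + 1) ≤ c k) →
      ∀ k₁ k₂ : ℕ, m ≤ k₁ → k₁ ≤ k₂ → c k₂ ≤ c k₁ := by
    intro m hstep k₁ k₂ h1 h12
    induction k₂, h12 using Nat.le_induction with
    | base => exact le_rfl
    | succ k₂ hk ih => exact (hstep k₂ (by omega)).trans ih
  by_cases hs : ∃ k, k < D ∧ c (k + 1) < c k
  · have hm := Nat.find_spec hs
    set m := Nat.find hs with hmdef
    obtain ⟨hmD, hmdrop⟩ := hm
    have hmin : ∀ k, k < m → ¬(k < D ∧ c (k + 1) < c k) := fun k hk => Nat.find_min hs hk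
    refine ⟨m, hmD.le, ?_, ?_⟩
    · refine chain_up m (fun k hk => ?_)
      have hnk := hmin k hk
      omega
    · intro k₁ k₂ h1 h2 _
      exact chain_down m (desc n m hmdrop) k₁ k₂ h1 h2
  · push_neg at hs
    refine ⟨D, le_rfl, ?_, ?_⟩
    · exact chain_up D (fun k hk => hs k hk)
    · intro k₁ k₂ h1 h2 h3
      have e1 : k₁ = D := le_antisymm (h2.trans h3) h1
      have e2 : k₂ = D := le_antisymm h3 (h1.trans h2)
      rw [e1, e2]
end

section
/- The over-Mahonian numbers dominate the Mahonian numbers coefficientwise with a power of 2: for all n ≥ 1 and 0 ≤ k ≤ C(n,2), i(n,k) ≤ i_{B'}(n,k) ≤ 2^k · i(n,k). -/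
open Polynomial Finset

/-- Row generating polynomial of the Mahonian numbers:
`∏_{m=1}^{n-1} (1 + z + ⋯ + zᵐ)`. -/
noncomputable def mahonianPoly (n : ℕ) : Polynomial ℕ :=
  ∏ m ∈ Finset.Icc 1 (n - 1), ∑ j ∈ Finset.range (m + 1), Polynomial.X ^ j

/-- The Mahonian number `i(n,k)`. -/
noncomputable def mahonian (n k : ℕ) : ℕ := (mahonianPoly n).coeff k

/-! Both sides are products of corresponding factors, and the factor `1 + 2z + ⋯ + 2zᵐ` lies
coefficientwise between `1 + z + ⋯ + zᵐ` and its image under `z ↦ 2z`. Over a semiring whose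
elements are all nonnegative, the relation `P ≤ Q ≤ P(cz)` (coefficientwise) is preserved by
products, because the coefficient of `zᵏ` in a product only involves pairs of degrees adding up
to `k`. -/

variable {R : Type*} [CommSemiring R] [PartialOrder R]

def CoeffSandwiched (c : R) (P Q : R[X]) : Prop :=
  ∀ k, P.coeff k ≤ Q.coeff k ∧ Q.coeff k ≤ c ^ k * P.coeff k

namespace CoeffSandwiched

variable {c : R}

theorem one : CoeffSandwiched c 1 1 := by
  intro k
  rcases eq_or_ne k 0 with rfl | hk
  · simp
  · simp [coeff_one, hk]

theorem mul [CanonicallyOrderedAdd R] {P Q P' Q' : R[X]} (h : CoeffSandwiched c P Q)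
    (h' : CoeffSandwiched c P' Q') : CoeffSandwiched c (P * P') (Q * Q') := by
  intro k
  simp only [coeff_mul, Finset.mul_sum]
  refine ⟨sum_le_sum fun x _ => mul_le_mul' (h x.1).1 (h' x.2).1,
    sum_le_sum fun x hx => ?_⟩
  rw [← mem_antidiagonal.mp hx]
  calc Q.coeff x.1 * Q'.coeff x.2
      ≤ (c ^ x.1 * P.coeff x.1) * (c ^ x.2 * P'.coeff x.2) := mul_le_mul' (h x.1).2 (h' x.2).2
    _ = c ^ (x.1 + x.2) * (P.coeff x.1 * P'.coeff x.2) := by ring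

theorem prod [CanonicallyOrderedAdd R] {ι : Type*} {s : Finset ι} {P Q : ι → R[X]}
    (h : ∀ i ∈ s, CoeffSandwiched c (P i) (Q i)) :
    CoeffSandwiched c (∏ i ∈ s, P i) (∏ i ∈ s, Q i) := by
  classical
  induction s using Finset.induction with
  | empty => simpa using one
  | insert a s ha ih =>
    rw [prod_insert ha, prod_insert ha]
    exact (h a (mem_insert_self a s)).mul (ih fun i hi => h i (mem_insert_of_mem hi))

theorem geom_sum [IsOrderedRing R] (hc : 1 ≤ c) (m : ℕ) :
    CoeffSandwiched c (∑ j ∈ range (m + 1), X ^ j) (1 + C c * ∑ j ∈ Icc 1 m, X ^ j) := by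
  intro k
  rcases eq_or_ne k 0 with rfl | hk
  · simp [coeff_X_pow]
  · have hk1 : 1 ≤ k := Nat.one_le_iff_ne_zero.mpr hk
    simp only [finsetSum_coeff, coeff_X_pow, coeff_add, coeff_one, coeff_C_mul, mem_range, mem_Icc,
      sum_ite_eq, Nat.lt_succ_iff, hk1, true_and, hk, if_false, zero_add, mul_ite, mul_one,
      mul_zero]
    split_ifs
    · exact ⟨hc, le_self_pow₀ hc hk⟩
    · exact ⟨le_rfl, le_rfl⟩

end CoeffSandwiched

theorem mahonian_le_overMahonian_le_general (n k : ℕ) :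
    mahonian n k ≤ overMahonian n k ∧ overMahonian n k ≤ 2 ^ k * mahonian n k :=
  CoeffSandwiched.prod
    (fun m _ => by simpa only [map_ofNat] using CoeffSandwiched.geom_sum one_le_two m) k

theorem mahonian_le_overMahonian_le (n k : ℕ) (hn : 1 ≤ n) (hk : k ≤ n.choose 2) :
    mahonian n k ≤ overMahonian n k ∧ overMahonian n k ≤ 2 ^ k * mahonian n k :=
  mahonian_le_overMahonian_le_general n k
end
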